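/- Under the weighted distance D_n defined from points X_1,…,X_n and weights Γ_1,…,Γ_n, the ε-covering number of any policy class Π satisfies N_{D_n}(ε, Π, {X_i, Γ_i}) ≤ N_H(ε², Π), where N_H is the distribution-free Hamming covering number of Π. -/

import Mathlib

open Classical

/-- Normalized Hamming distance between two `{-1,+1}`-valued functions on a list of points. -/
noncomputable def hammingDistOn {X : Type*} {m : ℕ} (pts : Fin m → X) (f g : X → ℝ) : ℝ :=
  ((Finset.univ.filter fun j : Fin m => f (pts j) ≠ g (pts j)).card : ℝ) / m

/-- `HCoverBound Π ε N` : for every finite collection of points there is a set of at most `N`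
functions that `ε`-covers `Π` in normalized Hamming distance (distribution-free covering). -/
def HCoverBound {X : Type*} (Pi : Set (X → ℝ)) (ε : ℝ) (N : ℕ) : Prop :=
  ∀ (m : ℕ) (pts : Fin m → X), 0 < m →
    ∃ C : Finset (X → ℝ), C.card ≤ N ∧
      ∀ π ∈ Pi, ∃ c ∈ C, hammingDistOn pts π c ≤ ε

/-- The weighted distance `D_n` associated with points `X_i` and weights `Γ_i`. -/
noncomputable def Dn {X : Type*} {n : ℕ} (Xp : Fin n → X) (Γ : Fin n → ℝ)
    (π₁ π₂ : X → ℝ) : ℝ :=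
  Real.sqrt ((1 / 4) * (∑ i, (Γ i) ^ 2 * (π₁ (Xp i) - π₂ (Xp i)) ^ 2) / ∑ i, (Γ i) ^ 2)

/-!
Put `w i = Γ i ^ 2 / ∑ j, Γ j ^ 2`. Clamping the members of a Hamming cover into `[-1, 1]` keeps
every squared disagreement at most `4`, so `D_n(π, clip ∘ c) ^ 2` is at most the `w`-weight of the
indices where `π` and `c` disagree. Repeating `X_i` about `m * w i` times gives a multiset on which
the normalized Hamming distance bounds this weight from above, up to an error `γ` as small as we
like. Weights of index sets take only finitely many values, so for small `γ` the bound
`< ε ^ 2 + γ` forces `≤ ε ^ 2`.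
-/

open Finset

def clip (t : ℝ) : ℝ := max (-1) (min 1 t)

lemma clip_of_eq_neg_one_or_eq_one {p : ℝ} (hp : p = -1 ∨ p = 1) : clip p = p := by
  rcases hp with rfl | rfl <;> norm_num [clip]

lemma sq_sub_clip_le_four {p : ℝ} (hp : p = -1 ∨ p = 1) (t : ℝ) : (p - clip t) ^ 2 ≤ 4 := by
  have hlo : -1 ≤ clip t := le_max_left _ _
  have hhi : clip t ≤ 1 := max_le (by norm_num) (min_le_left _ _)
  rcases hp with rfl | rfl <;> nlinarith

lemma exists_pos_forall_lt_add_imp_le {α : Type*} [Finite α] (f : α → ℝ) (a : ℝ) :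
    ∃ γ > 0, ∀ x, f x < a + γ → f x ≤ a := by
  have hgap : ∀ x, ∀ᶠ γ in nhdsWithin (0 : ℝ) (Set.Ioi 0), f x < a + γ → f x ≤ a := by
    intro x
    rcases le_or_gt (f x) a with hle | hlt
    · exact Filter.Eventually.of_forall fun _ _ => hle
    · filter_upwards [Ioo_mem_nhdsGT (sub_pos.2 hlt)] with γ hγ h
      linarith [hγ.2]
  exact ((Filter.eventually_all.2 hgap).and self_mem_nhdsWithin).exists.imp
    fun γ h => ⟨h.2, h.1⟩

section Points

variable {X : Type*}

noncomputable def disagreements {m : ℕ} (pts : Fin m → X) (f g : X → ℝ) : Finset (Fin m) :=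
  univ.filter fun j => f (pts j) ≠ g (pts j)

/-- The multiset of points in which `Xp i` occurs `k i` times. -/
def repeatPoints {n : ℕ} (Xp : Fin n → X) (k : Fin n → ℕ) : Fin (∑ i, k i) → X :=
  fun j => Xp (finSigmaFinEquiv.symm j).1

lemma card_disagreements_repeatPoints {n : ℕ} (Xp : Fin n → X) (k : Fin n → ℕ)
    (f g : X → ℝ) :
    (disagreements (repeatPoints Xp k) f g).card = ∑ i ∈ disagreements Xp f g, k i := by
  rw [disagreements, card_filter, ← finSigmaFinEquiv.sum_comp, ← univ_sigma_univ, sum_sigma,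
    disagreements, sum_filter]
  simp [repeatPoints]

lemma hammingDistOn_repeatPoints {n : ℕ} (Xp : Fin n → X) (k : Fin n → ℕ) (f g : X → ℝ) :
    hammingDistOn (repeatPoints Xp k) f g
      = ((∑ i ∈ disagreements Xp f g, k i : ℕ) : ℝ) / (∑ i, k i : ℕ) := by
  rw [hammingDistOn, ← card_disagreements_repeatPoints, disagreements]

end Points

lemma exists_nat_weights_approx {ι : Type*} [Fintype ι] (w : ι → ℝ) (hw : ∀ i, 0 ≤ w i)
    (hsum : ∑ i, w i = 1) {η : ℝ} (hη : 0 < η) :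
    ∃ k : ι → ℕ, 0 < ∑ i, k i ∧ ∀ s : Finset ι,
      ∑ i ∈ s, w i < ((∑ i ∈ s, k i : ℕ) : ℝ) / (∑ i, k i : ℕ) + η := by
  obtain ⟨m, hm⟩ := exists_nat_gt (max (Fintype.card ι / η) (Fintype.card ι))
  have hm_card : (Fintype.card ι : ℝ) < m := (le_max_right _ _).trans_lt hm
  have hm_pos : (0 : ℝ) < m := (Nat.cast_nonneg _).trans_lt hm_card
  have hcard_lt : (Fintype.card ι : ℝ) / m < η := by
    rw [div_lt_iff₀ hm_pos, mul_comm, ← div_lt_iff₀ hη]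
    exact (le_max_left _ _).trans_lt hm
  set k : ι → ℕ := fun i => ⌊m * w i⌋₊
  have hk_le : ∀ i, (k i : ℝ) ≤ m * w i := fun i => Nat.floor_le (by have := hw i; positivity)
  have hk_gt : ∀ i, m * w i < k i + 1 := fun i => Nat.lt_floor_add_one _
  have hsum_le : ∀ s : Finset ι, m * ∑ i ∈ s, w i ≤ ((∑ i ∈ s, k i : ℕ) : ℝ) + Fintype.card ι := by
    intro s
    calc m * ∑ i ∈ s, w i ≤ ∑ i ∈ s, ((k i : ℝ) + 1) := by
          rw [mul_sum]; exact sum_le_sum fun i _ => (hk_gt i).le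
      _ = ((∑ i ∈ s, k i : ℕ) : ℝ) + s.card := by push_cast [sum_add_distrib]; simp
      _ ≤ ((∑ i ∈ s, k i : ℕ) : ℝ) + Fintype.card ι := by gcongr; exact card_le_univ s
  have hK_le : ((∑ i, k i : ℕ) : ℝ) ≤ m := by
    push_cast
    calc ∑ i, (k i : ℝ) ≤ ∑ i, m * w i := sum_le_sum fun i _ => hk_le i
      _ = m := by rw [← mul_sum, hsum, mul_one]
  have hK_pos : (0 : ℝ) < (∑ i, k i : ℕ) := by
    have := hsum_le univ
    rw [hsum, mul_one] at this
    linarith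
  refine ⟨k, by exact_mod_cast hK_pos, fun s => ?_⟩
  calc ∑ i ∈ s, w i ≤ ((∑ i ∈ s, k i : ℕ) : ℝ) / m + Fintype.card ι / m := by
        rw [← add_div, le_div_iff₀ hm_pos, mul_comm]; exact hsum_le s
    _ < ((∑ i ∈ s, k i : ℕ) : ℝ) / (∑ i, k i : ℕ) + η := by
        exact add_lt_add_of_le_of_lt
          (div_le_div_of_nonneg_left (Nat.cast_nonneg _) hK_pos hK_le) hcard_lt

lemma Dn_clip_le {X : Type*} {n : ℕ} (Xp : Fin n → X) (Γ : Fin n → ℝ) {π : X → ℝ}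
    (hπ : ∀ x, π x = -1 ∨ π x = 1) (c : X → ℝ) :
    Dn Xp Γ π (clip ∘ c) ≤ √((∑ i ∈ disagreements Xp π c, Γ i ^ 2) / ∑ i, Γ i ^ 2) := by
  have hagree : ∀ i, π (Xp i) = c (Xp i) → clip (c (Xp i)) = π (Xp i) := fun i h =>
    h ▸ clip_of_eq_neg_one_or_eq_one (h ▸ hπ (Xp i))
  have hsupp : ∑ i, Γ i ^ 2 * (π (Xp i) - clip (c (Xp i))) ^ 2
      = ∑ i ∈ disagreements Xp π c, Γ i ^ 2 * (π (Xp i) - clip (c (Xp i))) ^ 2 := by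
    refine (sum_filter_of_ne fun i _ hne h => ?_).symm
    simp [hagree i h] at hne
  have hsum : 1 / 4 * ∑ i, Γ i ^ 2 * (π (Xp i) - clip (c (Xp i))) ^ 2
      ≤ ∑ i ∈ disagreements Xp π c, Γ i ^ 2 := by
    rw [hsupp, mul_sum]
    refine sum_le_sum fun i _ => ?_
    nlinarith [sq_sub_clip_le_four (hπ (Xp i)) (c (Xp i)), sq_nonneg (Γ i)]
  exact Real.sqrt_le_sqrt (div_le_div_of_nonneg_right hsum (sum_nonneg fun i _ => sq_nonneg _))

theorem Dn_covering_le_hamming_covering_general {X : Type*} {n : ℕ} (Xp : Fin n → X)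
    (Γ : Fin n → ℝ) (hΓ : 0 < ∑ i, (Γ i) ^ 2)
    (Pi : Set (X → ℝ)) (hPi : ∀ π ∈ Pi, ∀ x, π x = -1 ∨ π x = 1)
    (ε : ℝ) (hε : 0 < ε) (N : ℕ) (hN : HCoverBound Pi (ε ^ 2) N) :
    ∃ C : Finset (X → ℝ), C.card ≤ N ∧
      ∀ π ∈ Pi, ∃ c ∈ C, Dn Xp Γ π c ≤ ε := by
  set w : Fin n → ℝ := fun i => Γ i ^ 2 / ∑ j, Γ j ^ 2
  obtain ⟨γ, hγ, hgap⟩ :=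
    exists_pos_forall_lt_add_imp_le (fun s : Finset (Fin n) => ∑ i ∈ s, w i) (ε ^ 2)
  obtain ⟨k, hk, happrox⟩ := exists_nat_weights_approx w (fun i => by positivity)
    (by rw [← sum_div, div_self hΓ.ne']) hγ
  obtain ⟨C, hCcard, hC⟩ := hN _ (repeatPoints Xp k) hk
  refine ⟨C.image (clip ∘ ·), card_image_le.trans hCcard, fun π hπ => ?_⟩
  obtain ⟨c, hc, hdist⟩ := hC π hπ
  rw [hammingDistOn_repeatPoints] at hdist
  have hw : ∑ i ∈ disagreements Xp π c, w i ≤ ε ^ 2 :=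
    hgap _ ((happrox _).trans_le (by linarith))
  refine ⟨clip ∘ c, mem_image_of_mem _ hc, ?_⟩
  calc Dn Xp Γ π (clip ∘ c)
      ≤ √((∑ i ∈ disagreements Xp π c, Γ i ^ 2) / ∑ i, Γ i ^ 2) := Dn_clip_le Xp Γ (hPi π hπ) c
    _ ≤ √(ε ^ 2) := Real.sqrt_le_sqrt (by rwa [sum_div])
    _ = ε := Real.sqrt_sq hε.le

/-- The `ε`-covering number of `Π` under `D_n` is at most the distribution-free Hamming
covering number at scale `ε²`: any `N` valid for `N_H(ε², Π)` admits an `ε`-cover under `D_n`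
of cardinality at most `N`. -/
theorem Dn_covering_le_hamming_covering {X : Type*} {n : ℕ} (Xp : Fin n → X)
    (Γ : Fin n → ℝ) (hΓ : 0 < ∑ i, (Γ i) ^ 2) (hn : 0 < n)
    (Pi : Set (X → ℝ)) (hPi : ∀ π ∈ Pi, ∀ x, π x = -1 ∨ π x = 1)
    (ε : ℝ) (hε : 0 < ε) (N : ℕ) (hN : HCoverBound Pi (ε ^ 2) N) :
    ∃ C : Finset (X → ℝ), C.card ≤ N ∧
      ∀ π ∈ Pi, ∃ c ∈ C, Dn Xp Γ π c ≤ ε :=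
  Dn_covering_le_hamming_covering_general Xp Γ hΓ Pi hPi ε hε N hN
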